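/- arXiv:1610.07766 — 3 statements merged into one kernel-verified Lean document; each statement's English description precedes it below -/
import Mathlib

section
/- Let n ≥ 1 and let f, g : Fin n → ℝ≥0 be functions such that f(i) + g(i) ≤ H for every i. Let f' be a non-increasing rearrangement of f and g' a non-decreasing rearrangement of g (i.e., f' = f ∘ σ is monotone non-increasing and g' = g ∘ τ is monotone non-decreasing for some permutations σ, τ of Fin n). Then f'(i) + g'(i) ≤ H for every i ∈ Fin n. -/
theorem sorted_top_bottom_no_overlap
    (n : ℕ) (hn : 1 ≤ n) (H : NNReal) (f g : Fin n → NNReal)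
    (hfg : ∀ i, f i + g i ≤ H)
    (σ τ : Equiv.Perm (Fin n))
    (hf' : Antitone (f ∘ σ)) (hg' : Monotone (g ∘ τ)) :
    ∀ i : Fin n, f (σ i) + g (τ i) ≤ H := by
  intro i
  set A : Finset (Fin n) := (Finset.Iic i).image σ with hA
  set B : Finset (Fin n) := (Finset.Ici i).image τ with hB
  have hAcard : A.card = (Finset.Iic i).card :=
    Finset.card_image_of_injective _ σ.injective
  have hBcard : B.card = (Finset.Ici i).card :=
    Finset.card_image_of_injective _ τ.injective
  have hIicIci : (Finset.Iic i).card + (Finset.Ici i).card > n := by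
    have h1 : Finset.Iic i ∪ Finset.Ici i = Finset.univ := by
      ext j; simp [le_total j i]
    have h2 := Finset.card_union_add_card_inter (Finset.Iic i) (Finset.Ici i)
    rw [h1] at h2
    have h3 : i ∈ Finset.Iic i ∩ Finset.Ici i := by simp
    have h4 : 1 ≤ (Finset.Iic i ∩ Finset.Ici i).card := Finset.card_pos.mpr ⟨i, h3⟩
    have h5 : (Finset.univ : Finset (Fin n)).card = n := by simp
    omega
  have hne : (A ∩ B).Nonempty := by
    by_contra h
    rw [Finset.not_nonempty_iff_eq_empty] at h
    have hd : Disjoint A B := Finset.disjoint_iff_inter_eq_empty.mpr h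
    have := Finset.card_union_of_disjoint hd
    have hle : (A ∪ B).card ≤ n := by
      simpa using Finset.card_le_card (Finset.subset_univ (A ∪ B))
    omega
  obtain ⟨k, hk⟩ := hne
  rw [Finset.mem_inter] at hk
  obtain ⟨hkA, hkB⟩ := hk
  rw [hA, Finset.mem_image] at hkA
  rw [hB, Finset.mem_image] at hkB
  obtain ⟨j₁, hj₁, rfl⟩ := hkA
  obtain ⟨j₂, hj₂, hk2⟩ := hkB
  rw [Finset.mem_Iic] at hj₁
  rw [Finset.mem_Ici] at hj₂
  have h1 : f (σ i) ≤ f (σ j₁) := hf' hj₁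
  have h2 : g (τ i) ≤ g (τ j₂) := hg' hj₂
  calc f (σ i) + g (τ i) ≤ f (σ j₁) + g (τ j₂) := add_le_add h1 h2
    _ = f (σ j₁) + g (σ j₁) := by rw [hk2]
    _ ≤ H := hfg _
end

section
/- Let W, H > 0, let 0 < μ, and let K and m be natural numbers. Suppose a finite family R of pairwise non-overlapping axis-parallel rectangles inside [0, W] × [0, H] is given, each of height less than μ·H, and suppose L is a set of at most m horizontal lines. Then the rectangles of R whose interior is intersected by at least one line of L have total height at most 2·m·μ·H·⌊1/δ⌋, provided each rectangle also has width at least δ·W (0 < δ ≤ 1). -/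
/-!
A horizontal line crosses the rectangles it cuts along pairwise disjoint open intervals of
`[0, W]`, each of length at least `δ W`; comparing Lebesgue measures, it cuts at most `⌊1 / δ⌋`
rectangles, of total height less than `⌊1 / δ⌋ μ H`. A union bound over the at most `m` lines
finishes the proof.
-/

open MeasureTheory Set Finset

theorem Disjoint.of_set_prod_of_mem_right {α β : Type*} {s₁ s₂ : Set α} {t₁ t₂ : Set β} {y : β}
    (h : Disjoint (s₁ ×ˢ t₁) (s₂ ×ˢ t₂)) (h₁ : y ∈ t₁) (h₂ : y ∈ t₂) : Disjoint s₁ s₂ :=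
  (disjoint_prod.1 h).resolve_right (not_disjoint_iff.2 ⟨y, h₁, h₂⟩)

theorem sum_sub_le_of_pairwiseDisjoint_Ioo {ι : Type*} {s : Finset ι} {a b : ι → ℝ} {u v : ℝ}
    (huv : u ≤ v) (hab : ∀ i ∈ s, a i ≤ b i) (hsub : ∀ i ∈ s, Ioo (a i) (b i) ⊆ Icc u v)
    (hdisj : (s : Set ι).PairwiseDisjoint fun i => Ioo (a i) (b i)) :
    ∑ i ∈ s, (b i - a i) ≤ v - u := by
  have hvol : ∑ i ∈ s, volume (Ioo (a i) (b i)) ≤ volume (Icc u v) := by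
    rw [← measure_biUnion_finset hdisj fun i _ => measurableSet_Ioo]
    exact measure_mono (iUnion₂_subset hsub)
  simp only [Real.volume_Ioo, Real.volume_Icc] at hvol
  rwa [← ENNReal.ofReal_sum_of_nonneg fun i hi => sub_nonneg.2 (hab i hi),
    ENNReal.ofReal_le_ofReal_iff (sub_nonneg.2 huv)] at hvol

theorem card_le_floor_of_pairwiseDisjoint_Ioo {ι : Type*} {s : Finset ι} {a b : ι → ℝ}
    {u v c : ℝ} (hc : 0 < c) (huv : u ≤ v) (hlen : ∀ i ∈ s, c ≤ b i - a i)
    (hsub : ∀ i ∈ s, Ioo (a i) (b i) ⊆ Icc u v)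
    (hdisj : (s : Set ι).PairwiseDisjoint fun i => Ioo (a i) (b i)) :
    #s ≤ ⌊(v - u) / c⌋₊ := by
  have hab : ∀ i ∈ s, a i ≤ b i := fun i hi => by linarith [hlen i hi]
  refine Nat.le_floor <| (le_div_iff₀ hc).2 ?_
  calc (#s : ℝ) * c = #s • c := (nsmul_eq_mul _ _).symm
    _ ≤ ∑ i ∈ s, (b i - a i) := card_nsmul_le_sum _ _ _ hlen
    _ ≤ v - u := sum_sub_le_of_pairwiseDisjoint_Ioo huv hab hsub hdisj

theorem sum_filter_exists_le_sum_sum_filter {α β M : Type*} [AddCommMonoid M] [PartialOrder M]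
    [IsOrderedAddMonoid M] (s : Finset α) (t : Finset β) (p : α → β → Prop)
    [DecidablePred fun x => ∃ y ∈ t, p x y] [∀ y, DecidablePred (p · y)] [∀ x, DecidablePred (p x)]
    (f : α → M) (hf : ∀ x ∈ s.filter fun x => ∃ y ∈ t, p x y, 0 ≤ f x) :
    ∑ x ∈ s.filter (fun x => ∃ y ∈ t, p x y), f x ≤ ∑ y ∈ t, ∑ x ∈ s.filter (p · y), f x := by
  calc ∑ x ∈ s.filter (fun x => ∃ y ∈ t, p x y), f x
      ≤ ∑ x ∈ s.filter (fun x => ∃ y ∈ t, p x y), ∑ _y ∈ t.filter (p x), f x := by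
        refine sum_le_sum fun x hx => ?_
        obtain ⟨y, hy, hxy⟩ := (mem_filter.1 hx).2
        exact single_le_sum (f := fun _ => f x) (fun _ _ => hf x hx) (mem_filter.2 ⟨hy, hxy⟩)
    _ = ∑ y ∈ t, ∑ x ∈ s.filter (p · y), f x :=
        sum_comm' fun x y => by simp only [mem_filter]; grind

open Classical in
theorem cut_horizontal_items_total_height_general
    (W H μ δ : ℝ) (hW : 0 < W) (hH : 0 < H) (hμ : 0 < μ)
    (hδ0 : 0 < δ) (m : ℕ)
    (R : Finset ((ℝ × ℝ) × (ℝ × ℝ)))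
    (hsub : ∀ r ∈ R, Set.Icc r.1.1 r.1.2 ⊆ Set.Icc 0 W ∧ Set.Icc r.2.1 r.2.2 ⊆ Set.Icc 0 H)
    (hshort : ∀ r ∈ R, r.2.2 - r.2.1 < μ * H)
    (hwide : ∀ r ∈ R, δ * W ≤ r.1.2 - r.1.1)
    (hdisj : ∀ r ∈ R, ∀ s ∈ R, r ≠ s →
      Disjoint (Set.Ioo r.1.1 r.1.2 ×ˢ Set.Ioo r.2.1 r.2.2)
               (Set.Ioo s.1.1 s.1.2 ×ˢ Set.Ioo s.2.1 s.2.2))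
    (L : Finset ℝ) (hL : L.card ≤ m) :
    ∑ r ∈ R.filter (fun r => ∃ y ∈ L, r.2.1 < y ∧ y < r.2.2 ∧ r.1.1 < r.1.2),
        (r.2.2 - r.2.1) ≤ 2 * m * μ * H * ⌊1 / δ⌋₊ := by
  set cut : (ℝ × ℝ) × (ℝ × ℝ) → ℝ → Prop := fun r y => r.2.1 < y ∧ y < r.2.2 ∧ r.1.1 < r.1.2
  have hcard : ∀ y, #(R.filter (cut · y)) ≤ ⌊1 / δ⌋₊ := by
    intro y
    have hdisjx : (R.filter (cut · y) : Set ((ℝ × ℝ) × (ℝ × ℝ))).PairwiseDisjoint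
        fun r => Set.Ioo r.1.1 r.1.2 := by
      intro r hr s hs hrs
      obtain ⟨hrR, hry₁, hry₂, -⟩ := mem_filter.1 hr
      obtain ⟨hsR, hsy₁, hsy₂, -⟩ := mem_filter.1 hs
      exact (hdisj r hrR s hsR hrs).of_set_prod_of_mem_right ⟨hry₁, hry₂⟩ ⟨hsy₁, hsy₂⟩
    have h := card_le_floor_of_pairwiseDisjoint_Ioo (mul_pos hδ0 hW) hW.le
      (fun r hr => hwide r (mem_filter.1 hr).1)
      (fun r hr => Ioo_subset_Icc_self.trans (hsub r (mem_filter.1 hr).1).1) hdisjx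
    rwa [sub_zero, div_mul_cancel_right₀ hW.ne', ← one_div] at h
  have hline : ∀ y ∈ L, ∑ r ∈ R.filter (cut · y), (r.2.2 - r.2.1) ≤ ⌊1 / δ⌋₊ * (μ * H) := by
    intro y _
    calc ∑ r ∈ R.filter (cut · y), (r.2.2 - r.2.1) ≤ #(R.filter (cut · y)) • (μ * H) :=
          sum_le_card_nsmul _ _ _ fun r hr => (hshort r (mem_filter.1 hr).1).le
      _ ≤ ⌊1 / δ⌋₊ * (μ * H) := by
          rw [nsmul_eq_mul]; gcongr; exact hcard y
  calc ∑ r ∈ R.filter (fun r => ∃ y ∈ L, cut r y), (r.2.2 - r.2.1)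
      ≤ ∑ y ∈ L, ∑ r ∈ R.filter (cut · y), (r.2.2 - r.2.1) :=
        sum_filter_exists_le_sum_sum_filter R L cut _ fun r hr => by
          obtain ⟨y, -, hy⟩ := (mem_filter.1 hr).2; linarith [hy.1, hy.2.1]
    _ ≤ #L • (⌊1 / δ⌋₊ * (μ * H)) := sum_le_card_nsmul _ _ _ hline
    _ ≤ 2 * m * μ * H * ⌊1 / δ⌋₊ := by
        rw [nsmul_eq_mul]
        have hLm : (#L : ℝ) ≤ m := by exact_mod_cast hL
        have hbound : 0 ≤ (⌊1 / δ⌋₊ : ℝ) * (μ * H) := by positivity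
        nlinarith

open Classical in
/-- A rectangle is encoded as `((x₁, x₂), (y₁, y₂))`. -/
theorem cut_horizontal_items_total_height
    (W H μ δ : ℝ) (hW : 0 < W) (hH : 0 < H) (hμ : 0 < μ)
    (hδ0 : 0 < δ) (hδ1 : δ ≤ 1) (m : ℕ)
    (R : Finset ((ℝ × ℝ) × (ℝ × ℝ)))
    (hsub : ∀ r ∈ R, Set.Icc r.1.1 r.1.2 ⊆ Set.Icc 0 W ∧ Set.Icc r.2.1 r.2.2 ⊆ Set.Icc 0 H)
    (hshort : ∀ r ∈ R, r.2.2 - r.2.1 < μ * H)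
    (hwide : ∀ r ∈ R, δ * W ≤ r.1.2 - r.1.1)
    (hdisj : ∀ r ∈ R, ∀ s ∈ R, r ≠ s →
      Disjoint (Set.Ioo r.1.1 r.1.2 ×ˢ Set.Ioo r.2.1 r.2.2)
               (Set.Ioo s.1.1 s.1.2 ×ˢ Set.Ioo s.2.1 s.2.2))
    (L : Finset ℝ) (hL : L.card ≤ m) :
    ∑ r ∈ R.filter (fun r => ∃ y ∈ L, r.2.1 < y ∧ y < r.2.2 ∧ r.1.1 < r.1.2),
        (r.2.2 - r.2.1) ≤ 2 * m * μ * H * ⌊1 / δ⌋₊ :=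
  cut_horizontal_items_total_height_general W H μ δ hW hH hμ hδ0 m R hsub hshort hwide hdisj L hL
end

section
/- Let B = [0, w] × [0, H] be a box, and let R be a finite family of pairwise non-overlapping axis-parallel rectangles, each intersecting the interior of B, such that every vertical line intersects the interiors of at most two rectangles of R, and each rectangle of R touching the interior also has its y-projection of length > H/3 and contained in [0,H]. Then R can be partitioned into two sets T^t and T^b such that no rectangle of T^t lies (strictly) below a rectangle of T^b on any common vertical line; equivalently, for any vertical line stabbing two rectangles r₁ ∈ T^t, r₂ ∈ T^b, the y-interval of r₁ lies above the y-interval of r₂. -/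
/-- A rectangle is encoded as `((x₁, x₂), (y₁, y₂))`; its interior is
`Ioo x₁ x₂ ×ˢ Ioo y₁ y₂`. -/
theorem top_bottom_partition
    (w H : ℝ) (hw : 0 < w) (hH : 0 < H)
    (R : Finset ((ℝ × ℝ) × (ℝ × ℝ)))
    (hmeet : ∀ r ∈ R,
      ((Set.Ioo r.1.1 r.1.2 ×ˢ Set.Ioo r.2.1 r.2.2) ∩
        (Set.Ioo 0 w ×ˢ Set.Ioo 0 H)).Nonempty)
    (hysub : ∀ r ∈ R, Set.Ioo r.2.1 r.2.2 ⊆ Set.Icc 0 H)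
    (htall : ∀ r ∈ R, H / 3 < r.2.2 - r.2.1)
    (hdisj : ∀ r ∈ R, ∀ s ∈ R, r ≠ s →
      Disjoint (Set.Ioo r.1.1 r.1.2 ×ˢ Set.Ioo r.2.1 r.2.2)
               (Set.Ioo s.1.1 s.1.2 ×ˢ Set.Ioo s.2.1 s.2.2))
    (htwo : ∀ x : ℝ, Set.ncard {r | r ∈ R ∧ r.1.1 < x ∧ x < r.1.2} ≤ 2) :
    ∃ Tt Tb : Finset ((ℝ × ℝ) × (ℝ × ℝ)),
      Disjoint Tt Tb ∧ Tt ∪ Tb = R ∧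
      ∀ x : ℝ, ∀ r₁ ∈ Tt, ∀ r₂ ∈ Tb,
        r₁.1.1 < x → x < r₁.1.2 → r₂.1.1 < x → x < r₂.1.2 →
        r₂.2.2 ≤ r₁.2.1 := by
  classical
  refine ⟨R.filter (fun r => H / 3 < r.2.1), R.filter (fun r => ¬ H / 3 < r.2.1),
    ?_, ?_, ?_⟩
  · exact Finset.disjoint_filter_filter_not R R _
  · exact Finset.filter_union_filter_not_eq _ R
  · intro x r₁ h₁ r₂ h₂ ha hb hc hd
    rw [Finset.mem_filter] at h₁ h₂
    obtain ⟨hr₁, ht₁⟩ := h₁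
    obtain ⟨hr₂, ht₂⟩ := h₂
    push_neg at ht₂
    have hne : r₁ ≠ r₂ := by
      rintro rfl; exact absurd ht₁ (not_lt.mpr ht₂)
    have hdj := hdisj r₁ hr₁ r₂ hr₂ hne
    -- y-intervals are nonempty
    have hy₁ : r₁.2.1 < r₁.2.2 := by have := htall r₁ hr₁; linarith
    have hy₂ : r₂.2.1 < r₂.2.2 := by have := htall r₂ hr₂; linarith
    by_contra hcon
    push_neg at hcon
    -- r₂.2.1 ≤ H/3 < r₁.2.1, so intervals overlap at y = max r₁.2.1 r₂.2.1 midpoint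
    have hlt : r₂.2.1 < r₁.2.2 := lt_of_le_of_lt (ht₂.trans ht₁.le) hy₁
    set y := (max r₁.2.1 r₂.2.1 + min r₁.2.2 r₂.2.2) / 2 with hy
    have hmaxmin : max r₁.2.1 r₂.2.1 < min r₁.2.2 r₂.2.2 := by
      rcases max_cases r₁.2.1 r₂.2.1 with ⟨h, _⟩ | ⟨h, _⟩ <;>
        rcases min_cases r₁.2.2 r₂.2.2 with ⟨h', _⟩ | ⟨h', _⟩ <;>
        rw [h, h'] <;> linarith
    have hmem : (x, y) ∈ (Set.Ioo r₁.1.1 r₁.1.2 ×ˢ Set.Ioo r₁.2.1 r₁.2.2) ∩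
        (Set.Ioo r₂.1.1 r₂.1.2 ×ˢ Set.Ioo r₂.2.1 r₂.2.2) := by
      constructor <;> constructor <;> constructor <;>
        simp only [hy] <;>
        first
          | assumption
          | (have h1 := le_max_left r₁.2.1 r₂.2.1
             have h2 := le_max_right r₁.2.1 r₂.2.1
             have h3 := min_le_left r₁.2.2 r₂.2.2
             have h4 := min_le_right r₁.2.2 r₂.2.2
             linarith)
    exact Set.disjoint_iff.mp hdj hmem
end
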